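/- If a nonnegative companion-form matrix G̃ (block companion matrix with nonnegative first block row blocks G̃_1,...,G̃_q and identity subdiagonal blocks) satisfies ∑_{j=1}^q ‖G̃_j‖_∞ < 1, where ‖·‖_∞ is the maximum absolute row sum norm, then ρ(G̃) < 1. -/

import Mathlib

open Matrix

/-- Spectral radius of a real matrix: the supremum of the moduli of its complex eigenvalues. -/
noncomputable def specRad {n : Type*} [Fintype n] [DecidableEq n]
    (M : Matrix n n ℝ) : ℝ :=
  sSup {r : ℝ | ∃ μ : ℂ, μ ∈ spectrum ℂ (M.map Complex.ofReal) ∧ r = ‖μ‖}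

/-- The maximum absolute row sum norm `‖M‖_∞ = max_i ∑_j |M i j|`. -/
noncomputable def maxRowSum {n : Type*} [Fintype n] (M : Matrix n n ℝ) : ℝ :=
  ⨆ i, ∑ j, |M i j|

/-- The `Nq × Nq` block companion matrix with first block row `(Gs 0, ..., Gs (q-1))`
and identity blocks on the first block subdiagonal. -/
def companion {N q : ℕ} (Gs : Fin q → Matrix (Fin N) (Fin N) ℝ) :
    Matrix (Fin q × Fin N) (Fin q × Fin N) ℝ :=
  fun p p' =>
    if (p.1 : ℕ) = 0 then Gs p'.1 p.2 p'.2
    else if (p.1 : ℕ) = (p'.1 : ℕ) + 1 then (if p.2 = p'.2 then 1 else 0) else 0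

lemma rowSum_le_maxRowSum {n : Type*} [Fintype n] (M : Matrix n n ℝ) (i : n) :
    ∑ j, |M i j| ≤ maxRowSum M :=
  le_ciSup (f := fun i => ∑ j, |M i j|) (Set.Finite.bddAbove (Set.finite_range _)) i

lemma maxRowSum_nonneg {n : Type*} [Fintype n] (M : Matrix n n ℝ) : 0 ≤ maxRowSum M := by
  rcases isEmpty_or_nonempty n with h | h
  · rw [maxRowSum, iSup_of_empty', Real.sSup_empty]
  · obtain ⟨i⟩ := h
    exact le_trans (Finset.sum_nonneg fun j _ => abs_nonneg _) (rowSum_le_maxRowSum M i)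

lemma spec_to_eig {n : Type*} [Fintype n] [DecidableEq n] (A : Matrix n n ℂ) (μ : ℂ)
    (h : μ ∈ spectrum ℂ A) : ∃ v ≠ 0, A.mulVec v = μ • v := by
  rw [spectrum.mem_iff] at h
  rw [Matrix.isUnit_iff_isUnit_det, isUnit_iff_ne_zero, not_not,
    ← Matrix.exists_mulVec_eq_zero_iff] at h
  obtain ⟨v, hv, hv0⟩ := h
  refine ⟨v, hv, ?_⟩
  rw [sub_mulVec] at hv0
  have h2 : (algebraMap ℂ (Matrix n n ℂ) μ).mulVec v = μ • v := by
    rw [Matrix.algebraMap_eq_diagonal]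
    ext i
    simp [Matrix.mulVec_diagonal]
  rw [h2, sub_eq_zero] at hv0
  exact hv0.symm

lemma companion_eig_bound {N q : ℕ} (hq : 0 < q) (Gs : Fin q → Matrix (Fin N) (Fin N) ℝ)
    (μ : ℂ) (v : Fin q × Fin N → ℂ) (hv : v ≠ 0)
    (heig : ((companion Gs).map (Complex.ofReal)).mulVec v = μ • v) (hμ : μ ≠ 0) :
    ‖μ‖ ^ q ≤ ∑ j : Fin q, maxRowSum (Gs j) * ‖μ‖ ^ (q - 1 - (j:ℕ)) := by
  set z0 : Fin q := ⟨0, hq⟩ with hz0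
  -- row relations
  have hmv : ∀ p, ∑ p' : Fin q × Fin N, ((companion Gs p p' : ℝ) : ℂ) * v p' = μ * v p := by
    intro p
    have := congrFun heig p
    rw [Matrix.mulVec, dotProduct] at this
    simpa [Matrix.map_apply] using this
  have hstep : ∀ (m : ℕ) (hm : m + 1 < q) (i : Fin N),
      v (⟨m, Nat.lt_of_succ_lt hm⟩, i) = μ * v (⟨m+1, hm⟩, i) := by
    intro m hm i
    rw [← hmv (⟨m+1, hm⟩, i)]
    have hent : ∀ p' : Fin q × Fin N,
        ((companion Gs (⟨m+1, hm⟩, i) p' : ℝ) : ℂ) * v p' =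
          if p' = (⟨m, Nat.lt_of_succ_lt hm⟩, i) then v p' else 0 := by
      rintro ⟨j, l⟩
      rcases eq_or_ne (j : ℕ) m with hj | hj
      · have hj' : j = (⟨m, Nat.lt_of_succ_lt hm⟩ : Fin q) := Fin.ext hj
        rcases eq_or_ne l i with hl | hl
        · subst hl
          rw [if_pos (by rw [hj'])]
          subst hj'
          simp [companion]
        · rw [if_neg (by simp [hl])]
          subst hj'
          simp [companion, Ne.symm hl]
      · have h1 : (m + 1 : ℕ) ≠ (j : ℕ) + 1 := by omega
        rw [if_neg (by simp [Prod.ext_iff, Fin.ext_iff, hj])]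
        simp [companion, h1, Ne.symm hj]
    rw [Finset.sum_congr rfl fun p' _ => hent p',
      Finset.sum_ite_eq' Finset.univ (⟨⟨m, Nat.lt_of_succ_lt hm⟩, i⟩ : Fin q × Fin N) v,
      if_pos (Finset.mem_univ _)]
  have hpow : ∀ (m : ℕ) (hm : m < q) (i : Fin N), μ ^ m * v (⟨m, hm⟩, i) = v (z0, i) := by
    intro m
    induction m with
    | zero => intro hm i; simp [hz0]
    | succ m ih =>
      intro hm i
      calc μ ^ (m+1) * v (⟨m+1, hm⟩, i)
          = μ ^ m * (μ * v (⟨m+1, hm⟩, i)) := by ring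
        _ = μ ^ m * v (⟨m, Nat.lt_of_succ_lt hm⟩, i) := by rw [← hstep m hm i]
        _ = v (z0, i) := ih _ i
  -- v (z0, ·) is nonzero somewhere
  have hvne : ∃ p, v p ≠ 0 := by
    by_contra h
    push_neg at h
    exact hv (funext h)
  obtain ⟨⟨k, l0⟩, hkl⟩ := hvne
  have hz0ne : v (z0, l0) ≠ 0 := by
    rw [← hpow k.val k.isLt l0]
    refine mul_ne_zero (pow_ne_zero _ hμ) ?_
    simpa [Fin.eta] using hkl
  obtain ⟨i0, -, hmax⟩ := Finset.exists_max_image Finset.univ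
    (fun l => ‖v (z0, l)‖) ⟨l0, Finset.mem_univ _⟩
  set a := ‖v (z0, i0)‖ with ha_def
  have ha : 0 < a := lt_of_lt_of_le (norm_pos_iff.mpr hz0ne) (hmax l0 (Finset.mem_univ _))
  have hrow0 : ∑ j : Fin q, ∑ l : Fin N, ((Gs j i0 l : ℝ) : ℂ) * v (j, l) = μ * v (z0, i0) := by
    have := hmv (z0, i0)
    rw [Fintype.sum_prod_type] at this
    simpa [companion, hz0] using this
  have hkey : μ ^ q * v (z0, i0)
      = ∑ j : Fin q, μ ^ (q - 1 - (j:ℕ)) * ∑ l, ((Gs j i0 l : ℝ) : ℂ) * v (z0, l) := by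
    have h1 : μ ^ q * v (z0, i0) = μ ^ (q-1) * (μ * v (z0, i0)) := by
      rw [← mul_assoc, ← pow_succ]
      congr 2
      omega
    rw [h1, ← hrow0, Finset.mul_sum]
    refine Finset.sum_congr rfl fun j _ => ?_
    have h2 : μ ^ (q-1) = μ ^ (q - 1 - (j:ℕ)) * μ ^ (j:ℕ) := by
      rw [← pow_add]
      congr 1
      have := j.isLt
      omega
    rw [h2, Finset.mul_sum, Finset.mul_sum]
    refine Finset.sum_congr rfl fun l _ => ?_
    have h3 := hpow (j:ℕ) j.isLt l
    rw [Fin.eta] at h3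
    rw [← h3]
    ring
  have habs : ‖μ‖ ^ q * a
      ≤ (∑ j : Fin q, maxRowSum (Gs j) * ‖μ‖ ^ (q - 1 - (j:ℕ))) * a := by
    have e1 : ‖μ‖ ^ q * a = ‖μ ^ q * v (z0, i0)‖ := by
      rw [norm_mul, norm_pow]
    rw [e1, hkey]
    calc ‖∑ j : Fin q, μ ^ (q - 1 - (j:ℕ)) * ∑ l, ((Gs j i0 l : ℝ) : ℂ) * v (z0, l)‖
        ≤ ∑ j : Fin q, ‖μ ^ (q - 1 - (j:ℕ)) * ∑ l, ((Gs j i0 l : ℝ) : ℂ) * v (z0, l)‖ :=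
          norm_sum_le _ _
      _ ≤ ∑ j : Fin q, ‖μ‖ ^ (q - 1 - (j:ℕ)) * (maxRowSum (Gs j) * a) := by
          refine Finset.sum_le_sum fun j _ => ?_
          rw [norm_mul, norm_pow]
          refine mul_le_mul_of_nonneg_left ?_ (by positivity)
          calc ‖∑ l, ((Gs j i0 l : ℝ) : ℂ) * v (z0, l)‖
              ≤ ∑ l, ‖((Gs j i0 l : ℝ) : ℂ) * v (z0, l)‖ := norm_sum_le _ _
            _ ≤ ∑ l, |Gs j i0 l| * a := by
                refine Finset.sum_le_sum fun l _ => ?_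
                rw [norm_mul, Complex.norm_real, Real.norm_eq_abs]
                exact mul_le_mul_of_nonneg_left (hmax l (Finset.mem_univ _)) (abs_nonneg _)
            _ = (∑ l, |Gs j i0 l|) * a := by rw [Finset.sum_mul]
            _ ≤ maxRowSum (Gs j) * a :=
                mul_le_mul_of_nonneg_right (rowSum_le_maxRowSum _ _) ha.le
      _ = (∑ j : Fin q, maxRowSum (Gs j) * ‖μ‖ ^ (q - 1 - (j:ℕ))) * a := by
          rw [Finset.sum_mul]
          exact Finset.sum_congr rfl fun j _ => by ring
  exact le_of_mul_le_mul_right habs ha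

/-- If the blocks `G̃_j` are nonnegative and `∑_j ‖G̃_j‖_∞ < 1`, then the spectral
radius of the block companion matrix is strictly less than 1. -/
theorem stmt4 {N q : ℕ} (Gs : Fin q → Matrix (Fin N) (Fin N) ℝ)
    (hpos : ∀ j i l, 0 ≤ Gs j i l)
    (hsum : ∑ j : Fin q, maxRowSum (Gs j) < 1) :
    specRad (companion Gs) < 1 := by
  rcases isEmpty_or_nonempty (Fin q × Fin N) with he | hne
  · have hempty : {r : ℝ | ∃ μ : ℂ, μ ∈ spectrum ℂ ((companion Gs).map Complex.ofReal)
        ∧ r = ‖μ‖} = ∅ := by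
      ext r
      simp only [Set.mem_setOf_eq, Set.mem_empty_iff_false, iff_false, not_exists]
      rintro μ ⟨hμ, -⟩
      exact (spectrum.mem_iff.mp hμ)
        ((Matrix.isUnit_iff_isUnit_det _).mpr (by rw [Matrix.det_isEmpty]; exact isUnit_one))
    rw [specRad, hempty, Real.sSup_empty]
    norm_num
  · have hq : 0 < q := by
      obtain ⟨⟨k, i⟩⟩ := hne
      exact k.pos
    set S : ℝ := ∑ j : Fin q, maxRowSum (Gs j) with hS
    have hS0 : 0 ≤ S := Finset.sum_nonneg fun j _ => maxRowSum_nonneg _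
    set c : ℝ := max S (S ^ ((q:ℝ)⁻¹)) with hc
    have hc0 : 0 ≤ c := le_trans hS0 (le_max_left _ _)
    have hc1 : c < 1 := by
      refine max_lt hsum ?_
      exact Real.rpow_lt_one hS0 hsum (by positivity)
    refine lt_of_le_of_lt ?_ hc1
    apply Real.sSup_le _ hc0
    rintro r ⟨μ, hμ, rfl⟩
    by_cases hμ0 : μ = 0
    · simpa [hμ0] using hc0
    obtain ⟨v, hv, heig⟩ := spec_to_eig _ _ hμ
    have hbound := companion_eig_bound hq Gs μ v hv heig hμ0
    rcases le_or_gt 1 (‖μ‖) with h1 | h1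
    · -- |μ| ≥ 1 : derive |μ| ≤ S
      have hmono : ∀ j : Fin q, ‖μ‖ ^ (q - 1 - (j:ℕ)) ≤ ‖μ‖ ^ (q - 1) :=
        fun j => pow_le_pow_right₀ h1 (by omega)
      have h2 : ‖μ‖ ^ q ≤ S * ‖μ‖ ^ (q - 1) := by
        refine le_trans hbound ?_
        rw [hS, Finset.sum_mul]
        exact Finset.sum_le_sum fun j _ =>
          mul_le_mul_of_nonneg_left (hmono j) (maxRowSum_nonneg _)
      have h3 : ‖μ‖ * ‖μ‖ ^ (q - 1) ≤ S * ‖μ‖ ^ (q - 1) := by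
        refine le_trans (le_of_eq ?_) h2
        rw [← pow_succ']
        congr 1
        omega
      have hpos' : 0 < ‖μ‖ ^ (q - 1) := by positivity
      have h4 : ‖μ‖ ≤ S := le_of_mul_le_mul_right h3 hpos'
      exact le_trans h4 (le_max_left _ _)
    · -- |μ| < 1 : derive |μ| ≤ S^(1/q)
      have h2 : ‖μ‖ ^ q ≤ S := by
        refine le_trans hbound ?_
        calc ∑ j : Fin q, maxRowSum (Gs j) * ‖μ‖ ^ (q - 1 - (j:ℕ))
            ≤ ∑ j : Fin q, maxRowSum (Gs j) * 1 := by
              refine Finset.sum_le_sum fun j _ => ?_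
              exact mul_le_mul_of_nonneg_left
                (pow_le_one₀ (norm_nonneg _) h1.le) (maxRowSum_nonneg _)
          _ = S := by simp [hS]
      have h3 : ‖μ‖ = (‖μ‖ ^ q) ^ ((q:ℝ)⁻¹) := by
        rw [← Real.rpow_natCast (‖μ‖) q, ← Real.rpow_mul (norm_nonneg _),
          mul_inv_cancel₀ (by positivity : (q:ℝ) ≠ 0), Real.rpow_one]
      rw [h3]
      exact le_trans (Real.rpow_le_rpow (by positivity) h2 (by positivity)) (le_max_right _ _)
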